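/- Let d ≥ 1 and m ≥ 1 be integers, n = 2m + d − 1, and ε ∈ (0, 1]. For w ∈ {0,1}^m define u^w ∈ ℝ^{2m} whose first m entries equal 1 and whose last m entries equal εw, and define U^w ∈ ℝ^{n×d} whose first column is (u^w, 0_{d−1}), whose bottom-right (d−1)×(d−1) block is the identity I_{d−1}, and which is zero elsewhere. Then for all w₁, w₂ ∈ {0,1}^m with ‖w₁‖₀ = ‖w₂‖₀ = n₀: (i) ‖U^{w₁}(U^{w₁})ᵀ − U^{w₂}(U^{w₂})ᵀ‖_F² ≥ m · ε² · d_H(w₁, w₂); and (ii) ‖U^{w₁}(U^{w₁})ᵀ − U^{w₂}(U^{w₂})ᵀ‖_F ≤ 2√n · ε · √(d_H(w₁, w₂)), where d_H denotes Hamming distance and ‖w‖₀ the number of nonzero entries of w. -/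

import Mathlib

open scoped Matrix
open Finset

/-- Frobenius norm of a real matrix. -/
noncomputable def frob {m l : Type*} [Fintype m] [Fintype l] (A : Matrix m l ℝ) : ℝ :=
  Real.sqrt (∑ i, ∑ j, (A i j) ^ 2)

/-- The symmetric-case hypothesis matrix `U^w ∈ ℝ^{n×d}` with `n = 2m + d − 1`:
its first column is `(u^w, 0_{d−1})` where `u^w ∈ ℝ^{2m}` has first `m` entries `1` and
last `m` entries `εw`; the bottom-right `(d−1)×(d−1)` block is the identity; the rest is 0. -/
noncomputable def Usym (m d : ℕ) (ε : ℝ) (w : Fin m → ℝ) :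
    Matrix (Fin (2 * m + (d - 1))) (Fin d) ℝ :=
  Matrix.of fun i c =>
    if (c : ℕ) = 0 then
      (if (i : ℕ) < m then 1
       else if h : (i : ℕ) < 2 * m then ε * w ⟨(i : ℕ) - m, by omega⟩ else 0)
    else (if (i : ℕ) = 2 * m + (c : ℕ) - 1 then 1 else 0)

/-! Only the first column of `U^w` depends on `w`, so `U^{w₁}U^{w₁}ᵀ − U^{w₂}U^{w₂}ᵀ = a aᵀ − b bᵀ`
for the first columns `a, b`. As `‖a‖ = ‖b‖` (equal sparsity),
`‖a aᵀ − b bᵀ‖_F² = 2(‖a‖⁴ − ⟨a, b⟩²) = (‖a‖² + ⟨a, b⟩) ‖a − b‖²`. Here `‖a − b‖² = ε² d_H(w₁, w₂)`,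
and `‖a‖² + ⟨a, b⟩ = 2m + ε²(‖w₁‖₀ + ⟨w₁, w₂⟩)` lies between `m` and `4m ≤ 4n`. -/

open Matrix

theorem frob_sq {ι κ : Type*} [Fintype ι] [Fintype κ] (A : Matrix ι κ ℝ) :
    frob A ^ 2 = ∑ i, ∑ j, A i j ^ 2 :=
  Real.sq_sqrt (by positivity)

theorem mul_transpose_sub_mul_transpose_of_eq_off_col {ι κ R : Type*} [Fintype κ]
    [DecidableEq κ] [CommRing R] {A B : Matrix ι κ R} (c : κ)
    (h : ∀ i k, k ≠ c → A i k = B i k) :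
    A * Aᵀ - B * Bᵀ = vecMulVec (Aᵀ c) (Aᵀ c) - vecMulVec (Bᵀ c) (Bᵀ c) := by
  ext i j
  simp only [Matrix.sub_apply, mul_apply, vecMulVec_apply, transpose_apply, ← sum_sub_distrib]
  rw [Fintype.sum_eq_add_sum_compl c, add_eq_left]
  refine sum_eq_zero fun k hk => ?_
  rw [h i k (by simpa using hk), h j k (by simpa using hk), sub_self]

theorem sum_sum_sq_vecMulVec_sub_vecMulVec {ι R : Type*} [Fintype ι] [CommRing R]
    {a b : ι → R} (h : a ⬝ᵥ a = b ⬝ᵥ b) :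
    ∑ i, ∑ j, (vecMulVec a a - vecMulVec b b) i j ^ 2 =
      (a ⬝ᵥ a + a ⬝ᵥ b) * ((a - b) ⬝ᵥ (a - b)) := by
  have expand : ∑ i, ∑ j, (vecMulVec a a - vecMulVec b b) i j ^ 2 =
      (a ⬝ᵥ a) ^ 2 + (b ⬝ᵥ b) ^ 2 - 2 * (a ⬝ᵥ b) ^ 2 := by
    have (i j : ι) : (vecMulVec a a - vecMulVec b b) i j ^ 2 =
        a i * a i * (a j * a j) + b i * b i * (b j * b j) - 2 * (a i * b i * (a j * b j)) := by
      simp only [Matrix.sub_apply, vecMulVec_apply]; ring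
    simp only [this, sum_add_distrib, sum_sub_distrib, ← mul_sum, ← sum_mul, dotProduct]
    ring
  rw [expand, sub_dotProduct, dotProduct_sub, dotProduct_sub, dotProduct_comm b a]
  linear_combination (a ⬝ᵥ b - b ⬝ᵥ b) * h

theorem Usym_transpose_zero_dotProduct (m d : ℕ) (hd : 0 < d) (ε : ℝ) (w v : Fin m → ℝ) :
    (Usym m d ε w)ᵀ ⟨0, hd⟩ ⬝ᵥ (Usym m d ε v)ᵀ ⟨0, hd⟩ = m + ε ^ 2 * (w ⬝ᵥ v) := by
  simp only [dotProduct, transpose_apply, Usym, of_apply]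
  rw [← Fin.sum_congr' _ (show m + m + (d - 1) = 2 * m + (d - 1) by omega), Fin.sum_univ_add,
    Fin.sum_univ_add]
  simp [two_mul, mul_sum, show ∀ k, ¬ m + m + k < m by omega]
  exact sum_congr rfl fun i _ => by ring

theorem Usym_apply_eq_of_ne_zero (m d : ℕ) (ε : ℝ) (w v : Fin m → ℝ) (i : Fin (2 * m + (d - 1)))
    {c : Fin d} (hc : (c : ℕ) ≠ 0) : Usym m d ε w i c = Usym m d ε v i c := by
  simp only [Usym, of_apply, if_neg hc]

theorem frob_Usym_sub_sq (m d : ℕ) (hd : 0 < d) (ε : ℝ) (w v : Fin m → ℝ)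
    (h : w ⬝ᵥ w = v ⬝ᵥ v) :
    frob (Usym m d ε w * (Usym m d ε w)ᵀ - Usym m d ε v * (Usym m d ε v)ᵀ) ^ 2 =
      (2 * m + ε ^ 2 * (w ⬝ᵥ w + w ⬝ᵥ v)) * (ε ^ 2 * ((w - v) ⬝ᵥ (w - v))) := by
  rw [frob_sq, mul_transpose_sub_mul_transpose_of_eq_off_col ⟨0, hd⟩
      fun i c hc => Usym_apply_eq_of_ne_zero m d ε w v i (by simpa [Fin.ext_iff] using hc),
    sum_sum_sq_vecMulVec_sub_vecMulVec (by simp only [Usym_transpose_zero_dotProduct, h])]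
  simp only [sub_dotProduct, dotProduct_sub, Usym_transpose_zero_dotProduct, dotProduct_comm v w]
  ring

section Binary

variable {ι : Type*} [Fintype ι] {w v : ι → ℝ}

theorem dotProduct_self_eq_card_ne_zero (hw : ∀ i, w i = 0 ∨ w i = 1) :
    w ⬝ᵥ w = #{i | w i ≠ 0} := by
  rw [natCast_card_filter, dotProduct]
  refine sum_congr rfl fun i _ => ?_
  rcases hw i with h | h <;> simp [h]

theorem sub_dotProduct_sub_eq_card_ne (hw : ∀ i, w i = 0 ∨ w i = 1)
    (hv : ∀ i, v i = 0 ∨ v i = 1) : (w - v) ⬝ᵥ (w - v) = #{i | w i ≠ v i} := by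
  rw [natCast_card_filter, dotProduct]
  refine sum_congr rfl fun i _ => ?_
  rcases hw i with h | h <;> rcases hv i with h' | h' <;> simp [h, h']

theorem dotProduct_mem_Icc_of_binary (hw : ∀ i, w i = 0 ∨ w i = 1)
    (hv : ∀ i, v i = 0 ∨ v i = 1) : w ⬝ᵥ v ∈ Set.Icc 0 (Fintype.card ι : ℝ) := by
  have hterm (i : ι) : w i * v i ∈ Set.Icc (0 : ℝ) 1 := by
    rcases hw i with h | h <;> rcases hv i with h' | h' <;> simp [h, h']
  refine ⟨sum_nonneg fun i _ => (hterm i).1, ?_⟩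
  simpa [dotProduct] using sum_le_card_nsmul univ _ 1 fun i _ => (hterm i).2

end Binary

theorem stmt_13_general (d m : ℕ) (hd : 1 ≤ d)
    (ε : ℝ) (hε1 : 0 < ε) (hε2 : ε ≤ 1)
    (w₁ w₂ : Fin m → ℝ)
    (hw₁ : ∀ i, w₁ i = 0 ∨ w₁ i = 1) (hw₂ : ∀ i, w₂ i = 0 ∨ w₂ i = 1)
    (n₀ : ℕ)
    (hn₁ : (Finset.univ.filter fun i => w₁ i ≠ 0).card = n₀)
    (hn₂ : (Finset.univ.filter fun i => w₂ i ≠ 0).card = n₀) :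
    (m : ℝ) * ε ^ 2 * ((Finset.univ.filter fun i => w₁ i ≠ w₂ i).card : ℝ) ≤
        (frob (Usym m d ε w₁ * (Usym m d ε w₁)ᵀ - Usym m d ε w₂ * (Usym m d ε w₂)ᵀ)) ^ 2 ∧
      frob (Usym m d ε w₁ * (Usym m d ε w₁)ᵀ - Usym m d ε w₂ * (Usym m d ε w₂)ᵀ) ≤
        2 * Real.sqrt ((2 * m + (d - 1) : ℕ) : ℝ) * ε *
          Real.sqrt ((Finset.univ.filter fun i => w₁ i ≠ w₂ i).card : ℝ) := by
  have hsq := frob_Usym_sub_sq m d hd ε w₁ w₂ (by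
    rw [dotProduct_self_eq_card_ne_zero hw₁, dotProduct_self_eq_card_ne_zero hw₂, hn₁, hn₂])
  rw [sub_dotProduct_sub_eq_card_ne hw₁ hw₂] at hsq
  set dH : ℝ := ((#{i | w₁ i ≠ w₂ i} : ℕ) : ℝ)
  have hdH : 0 ≤ dH := Nat.cast_nonneg _
  obtain ⟨h₁₁, h₁₁'⟩ := dotProduct_mem_Icc_of_binary hw₁ hw₁
  obtain ⟨h₁₂, h₁₂'⟩ := dotProduct_mem_Icc_of_binary hw₁ hw₂
  simp only [Fintype.card_fin] at h₁₁' h₁₂'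
  have hn : 2 * m ≤ ((2 * m + (d - 1) : ℕ) : ℝ) := by exact_mod_cast Nat.le_add_right _ _
  have hε_sq : ε ^ 2 ≤ 1 := pow_le_one₀ hε1.le hε2
  have hfac_lower : (m : ℝ) ≤ 2 * m + ε ^ 2 * (w₁ ⬝ᵥ w₁ + w₁ ⬝ᵥ w₂) := by
    nlinarith [mul_nonneg (sq_nonneg ε) (add_nonneg h₁₁ h₁₂)]
  have hfac_upper :
      2 * m + ε ^ 2 * (w₁ ⬝ᵥ w₁ + w₁ ⬝ᵥ w₂) ≤ 4 * ((2 * m + (d - 1) : ℕ) : ℝ) := by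
    nlinarith [mul_le_mul hε_sq (add_le_add h₁₁' h₁₂') (add_nonneg h₁₁ h₁₂) zero_le_one]
  constructor
  · rw [hsq, mul_assoc]
    exact mul_le_mul_of_nonneg_right hfac_lower (by positivity)
  · refine le_of_pow_le_pow_left₀ two_ne_zero (by positivity) ?_
    rw [hsq, mul_pow, mul_pow, mul_pow, Real.sq_sqrt (Nat.cast_nonneg _), Real.sq_sqrt hdH]
    linarith [mul_le_mul_of_nonneg_right hfac_upper (by positivity : 0 ≤ ε ^ 2 * dH)]

/-- two-sided separation bounds for the symmetric hypothesis construction: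
for binary `w₁, w₂` with common sparsity `n₀` and `ε ∈ (0,1]`,
`m·ε²·d_H(w₁,w₂) ≤ ‖U^{w₁}(U^{w₁})ᵀ − U^{w₂}(U^{w₂})ᵀ‖_F²` and
`‖U^{w₁}(U^{w₁})ᵀ − U^{w₂}(U^{w₂})ᵀ‖_F ≤ 2√n·ε·√(d_H(w₁,w₂))`. -/
theorem stmt_13 (d m : ℕ) (hd : 1 ≤ d) (hm : 1 ≤ m)
    (ε : ℝ) (hε1 : 0 < ε) (hε2 : ε ≤ 1)
    (w₁ w₂ : Fin m → ℝ)
    (hw₁ : ∀ i, w₁ i = 0 ∨ w₁ i = 1) (hw₂ : ∀ i, w₂ i = 0 ∨ w₂ i = 1)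
    (n₀ : ℕ)
    (hn₁ : (Finset.univ.filter fun i => w₁ i ≠ 0).card = n₀)
    (hn₂ : (Finset.univ.filter fun i => w₂ i ≠ 0).card = n₀) :
    (m : ℝ) * ε ^ 2 * ((Finset.univ.filter fun i => w₁ i ≠ w₂ i).card : ℝ) ≤
        (frob (Usym m d ε w₁ * (Usym m d ε w₁)ᵀ - Usym m d ε w₂ * (Usym m d ε w₂)ᵀ)) ^ 2 ∧
      frob (Usym m d ε w₁ * (Usym m d ε w₁)ᵀ - Usym m d ε w₂ * (Usym m d ε w₂)ᵀ) ≤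
        2 * Real.sqrt ((2 * m + (d - 1) : ℕ) : ℝ) * ε *
          Real.sqrt ((Finset.univ.filter fun i => w₁ i ≠ w₂ i).card : ℝ) :=
  stmt_13_general d m hd ε hε1 hε2 w₁ w₂ hw₁ hw₂ n₀ hn₁ hn₂
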